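/- If u is a uniformly recurrent infinite word with no weak bispecial factor, then #R(w) ≥ 1 + ΔC(|w|) for every factor w of u, where ΔC(n) = C(n+1) − C(n). -/

import Mathlib

variable {A : Type*}

/-- The factor of `u` of length `n` starting at position `j`. -/
def factorAt (u : ℕ → A) (j n : ℕ) : List A :=
  (List.range n).map (fun i => u (j + i))

/-- `j` is an occurrence of the finite word `w` in `u`. -/
def OccursAt (u : ℕ → A) (w : List A) (j : ℕ) : Prop :=
  factorAt u j w.length = w

/-- `w` is a factor of the infinite word `u`. -/
def IsFactor (u : ℕ → A) (w : List A) : Prop :=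
  ∃ j, OccursAt u w j

/-- `v` is a return word of `w` in `u`: the word between two successive occurrences of `w`. -/
def IsReturnWord (u : ℕ → A) (w v : List A) : Prop :=
  ∃ j k, j < k ∧ OccursAt u w j ∧ OccursAt u w k ∧
    (∀ l, j < l → l < k → ¬ OccursAt u w l) ∧ v = factorAt u j (k - j)

/-- The set `R(w)` of return words of `w` in `u`. -/
def returnWords (u : ℕ → A) (w : List A) : Set (List A) :=
  {v | IsReturnWord u w v}

/-- Property `R_m`: every factor of `u` has exactly `m` return words. -/
def PropertyR (u : ℕ → A) (m : ℕ) : Prop :=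
  ∀ w, IsFactor u w → (returnWords u w).Finite ∧ (returnWords u w).ncard = m

/-- The set of left extensions of `w`. -/
def leftExt (u : ℕ → A) (w : List A) : Set A := {a | IsFactor u (a :: w)}

/-- The set of right extensions of `w`. -/
def rightExt (u : ℕ → A) (w : List A) : Set A := {b | IsFactor u (w ++ [b])}

def LeftSpecial (u : ℕ → A) (w : List A) : Prop := 2 ≤ (leftExt u w).ncard

def RightSpecial (u : ℕ → A) (w : List A) : Prop := 2 ≤ (rightExt u w).ncard

/-- The set of pairs `(a, b)` such that `a w b` is a factor of `u`. -/
def extPairs (u : ℕ → A) (w : List A) : Set (A × A) :=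
  {p | IsFactor u (p.1 :: (w ++ [p.2]))}

/-- The bilateral order `B(w)`. -/
noncomputable def bilateralOrder (u : ℕ → A) (w : List A) : ℤ :=
  ((extPairs u w).ncard : ℤ) - (leftExt u w).ncard - (rightExt u w).ncard + 1

/-- `w` is a weak bispecial factor of `u`. -/
def WeakBispecial (u : ℕ → A) (w : List A) : Prop :=
  IsFactor u w ∧ bilateralOrder u w < 0

/-- The factor complexity of `u`. -/
noncomputable def Complexity (u : ℕ → A) (n : ℕ) : ℕ :=
  {w : List A | w.length = n ∧ IsFactor u w}.ncard

/-- `u` is recurrent: every factor occurs at least twice. -/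
def Recurrent (u : ℕ → A) : Prop :=
  ∀ w, IsFactor u w → ∃ j k, j < k ∧ OccursAt u w j ∧ OccursAt u w k

/-- `u` is uniformly recurrent. -/
def UniformlyRecurrent (u : ℕ → A) : Prop :=
  ∀ n : ℕ, ∃ N : ℕ, ∀ w, IsFactor u w → w.length = N →
    ∀ v, IsFactor u v → v.length = n → v <:+: w

def EventuallyPeriodic (u : ℕ → A) : Prop :=
  ∃ p, 0 < p ∧ ∃ N, ∀ n, N ≤ n → u (n + p) = u n

/-- `w` is a maximal right special factor. -/
def MaximalRightSpecial (u : ℕ → A) (w : List A) : Prop :=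
  IsFactor u w ∧ RightSpecial u w ∧
    ∀ v, IsFactor u v → RightSpecial u v → w <:+ v → v = w

/-- The return word `v` of `w` starts with the letter `b`. -/
def StartsWithLetter (w v : List A) (b : A) : Prop := (w ++ [b]) <+: (v ++ w)

/-
Fix a factor `w` and let `T` (`returnPrefixes u w`) be the set of factors in which `w` occurs
only as a prefix. Under right extension `T` is a finite tree rooted at `w` (by uniform
recurrence), and the words by which one leaves it are exactly the complete return words
`v ++ w`; counting edges gives `#R(w) = 1 + ∑_{q ∈ T} (d(q) - 1)`, where `d` counts right
extensions. On the other hand `ΔC(|w|) = ∑_{|x| = |w|} (d(x) - 1)`, and `B(s) ≥ 0` reads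
`d(s) - 1 ≤ ∑_{a ∈ E_ℓ(s)} (d(a s) - 1)`. Extending each `x` to the left until `w` appears
therefore bounds `d(x) - 1` by the sum of `d(z) - 1` over the `z ∈ T` having `x` as a suffix,
and these sets of `z` are disjoint for distinct `x` of the same length.
-/

theorem Finset.card_eq_sum_ncard_preimage {γ δ β : Type*} {S : Finset γ} {P : Finset δ}
    {f : γ → δ} {g : δ → β → γ} (hfg : ∀ q b, f (g q b) = q)
    (hg : ∀ q, Function.Injective (g q)) (hS : ∀ x ∈ S, ∃ q ∈ P, ∃ b, x = g q b) :
    S.card = ∑ q ∈ P, (g q ⁻¹' S).ncard := by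
  classical
  rw [Finset.card_eq_sum_card_fiberwise (f := f) (t := P)]
  · refine Finset.sum_congr rfl fun q _ => ?_
    rw [← Set.ncard_coe_finset, ← Set.ncard_image_of_injective _ (hg q)]
    congr 1
    ext x
    simp only [Finset.coe_filter, Set.mem_ofPred_eq, Set.mem_image, Set.mem_preimage,
      Finset.mem_coe]
    constructor
    · rintro ⟨hx, rfl⟩
      obtain ⟨q, -, b, rfl⟩ := hS x hx
      exact ⟨b, by rwa [hfg], by rw [hfg]⟩
    · rintro ⟨b, hb, rfl⟩
      exact ⟨hb, hfg q b⟩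
  · intro x hx
    obtain ⟨q, hq, b, rfl⟩ := hS x hx
    rwa [hfg]

theorem Finset.sum_tsub_one_add_card {ι : Type*} {s : Finset ι} {f : ι → ℕ}
    (h : ∀ i ∈ s, 1 ≤ f i) : ∑ i ∈ s, (f i - 1) + s.card = ∑ i ∈ s, f i := by
  rw [Finset.card_eq_sum_ones, ← Finset.sum_add_distrib]
  exact Finset.sum_congr rfl fun i hi => Nat.sub_add_cancel (h i hi)

theorem sum_sum_filter_suffix_le [DecidableEq A] {X Z : Finset (List A)} {s : List A}
    (g : List A → ℕ) (hX : ∀ x ∈ X, ∀ y ∈ X, x.length = y.length) (hXs : ∀ x ∈ X, s <:+ x) :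
    ∑ x ∈ X, ∑ z ∈ Z with x <:+ z, g z ≤ ∑ z ∈ Z with s <:+ z, g z := by
  rw [← Finset.sum_biUnion]
  · refine Finset.sum_le_sum_of_subset fun z hz => ?_
    obtain ⟨x, hx, hz⟩ := Finset.mem_biUnion.mp hz
    rw [Finset.mem_filter] at hz ⊢
    exact ⟨hz.1, (hXs x hx).trans hz.2⟩
  · intro x hx y hy hxy
    refine Finset.disjoint_left.mpr fun z hzx hzy => hxy ?_
    have hlen := hX x hx y hy
    exact (List.suffix_of_suffix_length_le (Finset.mem_filter.mp hzx).2
      (Finset.mem_filter.mp hzy).2 hlen.le).eq_of_length hlen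

section Words

variable {u : ℕ → A}

theorem length_factorAt (u : ℕ → A) (j n : ℕ) : (factorAt u j n).length = n := by
  simp [factorAt]

theorem factorAt_add (u : ℕ → A) (j m k : ℕ) :
    factorAt u j (m + k) = factorAt u j m ++ factorAt u (j + m) k := by
  simp [factorAt, List.range_add, add_assoc]

theorem occursAt_factorAt (u : ℕ → A) (j n : ℕ) : OccursAt u (factorAt u j n) j := by
  simp [OccursAt, length_factorAt]

theorem OccursAt.eq_of_length_eq {x y : List A} {j : ℕ} (hx : OccursAt u x j)
    (hy : OccursAt u y j) (h : x.length = y.length) : x = y := by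
  rw [← hx, ← hy, h]

theorem occursAt_append_iff {s t : List A} {j : ℕ} :
    OccursAt u (s ++ t) j ↔ OccursAt u s j ∧ OccursAt u t (j + s.length) := by
  unfold OccursAt
  rw [List.length_append, factorAt_add]
  exact ⟨fun h => List.append_inj h (length_factorAt _ _ _), fun ⟨hs, ht⟩ => by rw [hs, ht]⟩

theorem OccursAt.take {q : List A} {l : ℕ} (hq : OccursAt u q l) (n : ℕ) :
    OccursAt u (q.take n) l := by
  rw [← List.take_append_drop n q] at hq
  exact (occursAt_append_iff.1 hq).1

theorem OccursAt.drop {q : List A} {l n : ℕ} (hq : OccursAt u q l) (hn : n ≤ q.length) :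
    OccursAt u (q.drop n) (l + n) := by
  rw [← List.take_append_drop n q] at hq
  simpa [hn] using (occursAt_append_iff.1 hq).2

theorem IsFactor.infix {s t : List A} (h : IsFactor u t) (hst : s <:+: t) : IsFactor u s := by
  obtain ⟨p, q, rfl⟩ := hst
  obtain ⟨j, hj⟩ := h
  exact ⟨j + p.length, (occursAt_append_iff.1 (occursAt_append_iff.1 hj).1).2⟩

theorem exists_isFactor_append_singleton {s : List A} (h : IsFactor u s) :
    ∃ b, IsFactor u (s ++ [b]) := by
  obtain ⟨j, hj⟩ := h
  exact ⟨u (j + s.length), j, occursAt_append_iff.2 ⟨hj, by simp [OccursAt, factorAt]⟩⟩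

theorem one_le_ncard_rightExt [Finite A] {s : List A} (h : IsFactor u s) :
    1 ≤ (rightExt u s).ncard := by
  obtain ⟨b, hb⟩ := exists_isFactor_append_singleton h
  exact (Set.ncard_pos (Set.toFinite _)).mpr ⟨b, hb⟩

end Words

def OccursIn (w q : List A) (t : ℕ) : Prop :=
  t + w.length ≤ q.length ∧ (q.drop t).take w.length = w

section OccursIn

variable {w q : List A} {t : ℕ}

theorem occursIn_zero_iff : OccursIn w q 0 ↔ w <+: q := by
  rw [OccursIn, List.drop_zero, Nat.zero_add, List.prefix_iff_eq_take, eq_comm]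
  exact ⟨fun h => h.2, fun h => ⟨h ▸ List.length_take_le' _ _, h⟩⟩

theorem occursIn_cons_succ {a : A} : OccursIn w (a :: q) (t + 1) ↔ OccursIn w q t := by
  simp only [OccursIn, List.drop_succ_cons, List.length_cons, Nat.add_right_comm t 1,
    Nat.add_le_add_iff_right]

theorem occursIn_iff_of_append (r : List A) :
    OccursIn w q t ↔ t + w.length ≤ q.length ∧ OccursIn w (q ++ r) t := by
  have htake (h : t + w.length ≤ q.length) :
      ((q ++ r).drop t).take w.length = (q.drop t).take w.length := by
    rw [List.drop_append_of_le_length (by omega),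
      List.take_append_of_le_length (by simp; omega)]
  refine ⟨fun ⟨hle, h⟩ => ⟨hle, by simp; omega, (htake hle).trans h⟩,
    fun ⟨hle, h⟩ => ⟨hle, (htake hle).symm.trans h.2⟩⟩

theorem exists_occursIn_of_infix (h : w <:+: q) : ∃ t, OccursIn w q t := by
  obtain ⟨p, s, rfl⟩ := h
  exact ⟨p.length, by simp, by simp⟩

theorem occursIn_iff_occursAt {u : ℕ → A} {l : ℕ} (hq : OccursAt u q l) :
    OccursIn w q t ↔ t + w.length ≤ q.length ∧ OccursAt u w (l + t) := by
  have hpiece (h : t + w.length ≤ q.length) : OccursAt u ((q.drop t).take w.length) (l + t) :=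
    (hq.drop (by omega)).take _
  refine ⟨fun ⟨hle, hw⟩ => ⟨hle, hw ▸ hpiece hle⟩, fun ⟨hle, hw⟩ => ⟨hle, ?_⟩⟩
  exact (hpiece hle).eq_of_length_eq hw (by simp; omega)

end OccursIn

def returnPrefixes (u : ℕ → A) (w : List A) : Set (List A) :=
  {q | IsFactor u q ∧ ∀ t, OccursIn w q t ↔ t = 0}

def completeReturnWords (u : ℕ → A) (w : List A) : Set (List A) :=
  {q | IsFactor u q ∧ w.length < q.length ∧
    ∀ t, OccursIn w q t ↔ t = 0 ∨ t = q.length - w.length}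

section ReturnTree

variable {u : ℕ → A} {w : List A}

theorem prefix_of_mem_returnPrefixes {q : List A} (hq : q ∈ returnPrefixes u w) : w <+: q :=
  occursIn_zero_iff.1 ((hq.2 0).2 rfl)

theorem self_mem_returnPrefixes (hw : IsFactor u w) : w ∈ returnPrefixes u w :=
  ⟨hw, fun t => ⟨fun h => by have := h.1; omega,
    by rintro rfl; exact occursIn_zero_iff.2 List.prefix_rfl⟩⟩

theorem completeReturnWords_eq_image :
    completeReturnWords u w = (· ++ w) '' returnWords u w := by
  ext q
  constructor
  · rintro ⟨⟨l, hl⟩, hlen, hocc⟩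
    set m := q.length - w.length
    have hwl : OccursAt u w l := by
      simpa using ((occursIn_iff_occursAt hl).1 ((hocc 0).2 (Or.inl rfl))).2
    have hwm : OccursAt u w (l + m) :=
      ((occursIn_iff_occursAt hl).1 ((hocc m).2 (Or.inr rfl))).2
    have htake : factorAt u l m = q.take m := by
      simpa [OccursAt, m] using hl.take m
    have hdrop : q.drop m = w := (hl.drop (by omega)).eq_of_length_eq hwm (by simp [m]; omega)
    refine ⟨q.take m, ⟨l, l + m, by omega, hwl, hwm, fun l' h1 h2 hl' => ?_, ?_⟩, ?_⟩
    · have := (hocc (l' - l)).1 ((occursIn_iff_occursAt hl).2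
        ⟨by omega, by rwa [Nat.add_sub_cancel' h1.le]⟩)
      omega
    · rw [Nat.add_sub_cancel_left, htake]
    · show q.take m ++ w = q
      rw [← hdrop, List.take_append_drop]
  · rintro ⟨v, ⟨j, k, hjk, hj, hk, hmid, rfl⟩, rfl⟩
    show factorAt u j (k - j) ++ w ∈ completeReturnWords u w
    have hq : OccursAt u (factorAt u j (k - j) ++ w) j := occursAt_append_iff.2
      ⟨occursAt_factorAt _ _ _, by rwa [length_factorAt, Nat.add_sub_cancel' hjk.le]⟩
    have hlen : (factorAt u j (k - j) ++ w).length = k - j + w.length := by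
      simp [length_factorAt]
    refine ⟨⟨j, hq⟩, by omega, fun t => ?_⟩
    rw [occursIn_iff_occursAt hq, hlen, Nat.add_sub_cancel]
    constructor
    · rintro ⟨ht, hocc⟩
      by_contra! h
      exact hmid (j + t) (by omega) (by omega) hocc
    · rintro (rfl | rfl)
      · exact ⟨by omega, by simpa using hj⟩
      · exact ⟨le_rfl, by rwa [Nat.add_sub_cancel' hjk.le]⟩

theorem ncard_returnWords :
    (returnWords u w).ncard = (completeReturnWords u w).ncard := by
  rw [completeReturnWords_eq_image,
    Set.ncard_image_of_injective _ (List.append_left_injective w)]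

theorem append_singleton_mem_of_mem_returnPrefixes {q : List A} {b : A}
    (hq : q ∈ returnPrefixes u w) (hb : IsFactor u (q ++ [b])) :
    q ++ [b] ∈ returnPrefixes u w ∨ q ++ [b] ∈ completeReturnWords u w := by
  have hlen : w.length ≤ q.length := (prefix_of_mem_returnPrefixes hq).length_le
  obtain ⟨-, hocc⟩ := hq
  have hold (t : ℕ) (ht : t + w.length ≤ q.length) : OccursIn w (q ++ [b]) t ↔ t = 0 := by
    rw [← hocc t, occursIn_iff_of_append (q := q) [b]]
    exact (and_iff_right ht).symm
  have hnew (t : ℕ) (ht : OccursIn w (q ++ [b]) t) (hlt : q.length < t + w.length) :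
      t = (q ++ [b]).length - w.length := by
    have := ht.1
    simp only [List.length_append, List.length_singleton] at this ⊢
    omega
  by_cases hend : OccursIn w (q ++ [b]) ((q ++ [b]).length - w.length)
  · refine Or.inr ⟨hb, by simp; omega, fun t => ⟨fun ht => ?_, ?_⟩⟩
    · by_cases hle : t + w.length ≤ q.length
      · exact Or.inl ((hold t hle).1 ht)
      · exact Or.inr (hnew t ht (by omega))
    · rintro (rfl | rfl)
      · exact (hold 0 (by omega)).2 rfl
      · exact hend
  · refine Or.inl ⟨hb, fun t => ⟨fun ht => ?_, ?_⟩⟩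
    · by_cases hle : t + w.length ≤ q.length
      · exact (hold t hle).1 ht
      · exact absurd (hnew t ht (by omega) ▸ ht) hend
    · rintro rfl
      exact (hold 0 (by omega)).2 rfl

theorem exists_eq_append_singleton_of_mem {x : List A}
    (hx : x ∈ returnPrefixes u w ∨ x ∈ completeReturnWords u w) (hxw : x ≠ w) :
    ∃ q ∈ returnPrefixes u w, ∃ b, x = q ++ [b] := by
  have hfac : IsFactor u x := by rcases hx with ⟨h, -⟩ | ⟨h, -⟩ <;> exact h
  have hocc (t : ℕ) (ht : OccursIn w x t) : t = 0 ∨ t = x.length - w.length := by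
    rcases hx with ⟨-, h⟩ | ⟨-, -, h⟩
    exacts [Or.inl ((h t).1 ht), (h t).1 ht]
  have hx0 : OccursIn w x 0 := by
    rcases hx with ⟨-, h⟩ | ⟨-, -, h⟩
    exacts [(h 0).2 rfl, (h 0).2 (Or.inl rfl)]
  have hlen : w.length < x.length := by
    have hpre := occursIn_zero_iff.1 hx0
    exact lt_of_le_of_ne hpre.length_le fun he => hxw (hpre.eq_of_length he).symm
  obtain rfl | ⟨q, b, rfl⟩ := List.eq_nil_or_concat' x
  · simp at hlen
  refine ⟨q, ⟨hfac.infix (List.prefix_append q [b]).isInfix, fun t => ?_⟩, b, rfl⟩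
  simp only [List.length_append, List.length_singleton] at hlen hocc
  rw [occursIn_iff_of_append [b]]
  constructor
  · rintro ⟨hle, h⟩
    rcases hocc t h with h | h
    · exact h
    · omega
  · rintro rfl
    exact ⟨by omega, hx0⟩

theorem exists_occursIn_of_le_length {N : ℕ}
    (hN : ∀ y, IsFactor u y → y.length = N → w <:+: y) {q : List A} (hq : IsFactor u q)
    (hlen : N ≤ q.length) : ∃ t, OccursIn w q t := by
  have hwq : w <:+: q.take N :=
    hN _ (hq.infix (List.take_prefix N q).isInfix) (List.length_take_of_le hlen)
  exact exists_occursIn_of_infix (hwq.trans (List.take_prefix N q).isInfix)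

theorem returnPrefixes_finite [Finite A] {N : ℕ}
    (hN : ∀ y, IsFactor u y → y.length = N → w <:+: y) : (returnPrefixes u w).Finite := by
  refine (List.finite_length_le A N).subset fun q ⟨hq, hocc⟩ => ?_
  show q.length ≤ N
  by_contra! hlen
  obtain ⟨a, q', rfl⟩ := List.exists_cons_of_length_pos (by omega : 0 < q.length)
  obtain ⟨t, ht⟩ := exists_occursIn_of_le_length hN
    (hq.infix (List.suffix_cons a q').isInfix) (by simp at hlen; omega)
  exact Nat.succ_ne_zero t ((hocc (t + 1)).1 (occursIn_cons_succ.2 ht))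

theorem completeReturnWords_finite [Finite A] (hT : (returnPrefixes u w).Finite) :
    (completeReturnWords u w).Finite := by
  refine (hT.biUnion fun q _ => Set.finite_range fun b : A => q ++ [b]).subset fun x hx => ?_
  have hxw : x ≠ w := fun h => (lt_irrefl _ (h ▸ hx.2.1))
  obtain ⟨q, hq, b, rfl⟩ := exists_eq_append_singleton_of_mem (Or.inr hx) hxw
  exact Set.mem_biUnion hq ⟨b, rfl⟩

end ReturnTree

def factorsOfLength (u : ℕ → A) (n : ℕ) : Set (List A) :=
  {w | w.length = n ∧ IsFactor u w}

section Counting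

variable [Finite A] {u : ℕ → A} {w : List A}

theorem ncard_completeReturnWords (hw : IsFactor u w) (hT : (returnPrefixes u w).Finite) :
    (completeReturnWords u w).ncard = 1 + ∑ q ∈ hT.toFinset, ((rightExt u q).ncard - 1) := by
  classical
  have hC := completeReturnWords_finite hT
  set S := (hT.toFinset ∪ hC.toFinset).erase w
  have hmem (x : List A) :
      x ∈ S ↔ (x ∈ returnPrefixes u w ∨ x ∈ completeReturnWords u w) ∧ x ≠ w := by
    simp only [S, Finset.mem_erase, Finset.mem_union, Set.Finite.mem_toFinset]
    tauto
  have hfiber (q : List A) (hq : q ∈ returnPrefixes u w) :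
      (fun b => q ++ [b]) ⁻¹' ↑S = rightExt u q := by
    ext b
    simp only [Set.mem_preimage, Finset.mem_coe, hmem]
    refine ⟨fun ⟨h, _⟩ => ?_, fun hb => ⟨append_singleton_mem_of_mem_returnPrefixes hq hb, ?_⟩⟩
    · rcases h with ⟨h, -⟩ | ⟨h, -⟩ <;> exact h
    · intro he
      have := (prefix_of_mem_returnPrefixes hq).length_le
      have := congrArg List.length he
      simp only [List.length_append, List.length_singleton] at this
      omega
  have hS : S.card = ∑ q ∈ hT.toFinset, (rightExt u q).ncard := by
    rw [Finset.card_eq_sum_ncard_preimage (f := List.dropLast) (g := fun q b => q ++ [b])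
      (fun q b => List.dropLast_concat) (fun q b c h => by simpa using h)]
    · exact Finset.sum_congr rfl fun q hq => by rw [hfiber q (hT.mem_toFinset.1 hq)]
    · intro x hx
      obtain ⟨hx, hxw⟩ := (hmem x).1 hx
      obtain ⟨q, hq, b, rfl⟩ := exists_eq_append_singleton_of_mem hx hxw
      exact ⟨q, hT.mem_toFinset.2 hq, b, rfl⟩
  have hdisj : Disjoint hT.toFinset hC.toFinset := by
    refine Finset.disjoint_left.2 fun q hqT hqC => ?_
    obtain ⟨-, hocc⟩ := hT.mem_toFinset.1 hqT
    obtain ⟨-, hlen, hend⟩ := hC.mem_toFinset.1 hqC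
    have := (hocc _).1 ((hend (q.length - w.length)).2 (Or.inr rfl))
    omega
  have hwT : w ∈ hT.toFinset := hT.mem_toFinset.2 (self_mem_returnPrefixes hw)
  have hcard : S.card + 1 = hT.toFinset.card + hC.toFinset.card := by
    rw [Finset.card_erase_of_mem (Finset.mem_union_left _ hwT),
      Finset.card_union_of_disjoint hdisj]
    have := Finset.card_pos.2 ⟨w, hwT⟩
    omega
  have hsum := Finset.sum_tsub_one_add_card fun q hq =>
    one_le_ncard_rightExt (hT.mem_toFinset.1 hq).1
  rw [Set.ncard_eq_toFinset_card _ hC]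
  omega

theorem factorsOfLength_finite (u : ℕ → A) (n : ℕ) : (factorsOfLength u n).Finite :=
  (List.finite_length_eq A n).subset fun _ h => h.1

theorem complexity_succ (u : ℕ → A) (n : ℕ) :
    Complexity u (n + 1) = Complexity u n +
      ∑ x ∈ (factorsOfLength_finite u n).toFinset, ((rightExt u x).ncard - 1) := by
  have hF := factorsOfLength_finite u
  have hcard :
      (factorsOfLength u (n + 1)).ncard = ∑ x ∈ (hF n).toFinset, (rightExt u x).ncard := by
    rw [Set.ncard_eq_toFinset_card _ (hF (n + 1)), Finset.card_eq_sum_ncard_preimage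
      (f := List.dropLast) (g := fun q b => q ++ [b])
      (fun q b => List.dropLast_concat) (fun q b c h => by simpa using h)]
    · refine Finset.sum_congr rfl fun x hx => congrArg Set.ncard (Set.ext fun b => ?_)
      have hx := ((hF n).mem_toFinset.1 hx).1
      simp [factorsOfLength, hx, rightExt]
    · intro x hx
      obtain ⟨hlen, hfac⟩ := (hF (n + 1)).mem_toFinset.1 hx
      obtain rfl | ⟨q, b, rfl⟩ := List.eq_nil_or_concat' x
      · simp at hlen
      refine ⟨q, (hF n).mem_toFinset.2 ⟨by simpa using hlen, ?_⟩, b, rfl⟩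
      exact hfac.infix (List.prefix_append q [b]).isInfix
  have hsum := Finset.sum_tsub_one_add_card fun x hx =>
    one_le_ncard_rightExt ((hF n).mem_toFinset.1 hx).2
  change (factorsOfLength u (n + 1)).ncard = (factorsOfLength u n).ncard + _
  rw [Set.ncard_eq_toFinset_card _ (hF n)]
  omega

theorem ncard_rightExt_sub_one_le_sum {s : List A} (hB : 0 ≤ bilateralOrder u s) :
    (rightExt u s).ncard - 1 ≤
      ∑ a ∈ (leftExt u s).toFinite.toFinset, ((rightExt u (a :: s)).ncard - 1) := by
  have hE := (leftExt u s).toFinite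
  have hpairs : (extPairs u s).ncard = ∑ a ∈ hE.toFinset, (rightExt u (a :: s)).ncard := by
    rw [Set.ncard_eq_toFinset_card _ (Set.toFinite _), Finset.card_eq_sum_ncard_preimage
      (f := Prod.fst) (g := Prod.mk) (fun _ _ => rfl) Prod.mk_right_injective]
    · refine Finset.sum_congr rfl fun a _ => ?_
      rw [Set.Finite.coe_toFinset]
      rfl
    · intro p hp
      refine ⟨p.1, hE.mem_toFinset.2 ?_, p.2, rfl⟩
      exact ((Set.toFinite _).mem_toFinset.1 hp).infix ⟨[], [p.2], by simp⟩
  have hsum := Finset.sum_tsub_one_add_card fun a ha =>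
    one_le_ncard_rightExt (u := u) (hE.mem_toFinset.1 ha)
  rw [bilateralOrder, Set.ncard_eq_toFinset_card _ hE] at hB
  omega

theorem ncard_rightExt_sub_one_le_sum_returnPrefixes [DecidableEq A] {N : ℕ}
    (hN : ∀ y, IsFactor u y → y.length = N → w <:+: y)
    (hB : ∀ s, IsFactor u s → 0 ≤ bilateralOrder u s) (hT : (returnPrefixes u w).Finite)
    {s : List A} (hs : IsFactor u s) (hocc : ∀ t, OccursIn w s t → t = 0) :
    (rightExt u s).ncard - 1 ≤ ∑ z ∈ hT.toFinset with s <:+ z, ((rightExt u z).ncard - 1) := by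
  by_cases hs0 : OccursIn w s 0
  · refine Finset.single_le_sum (f := fun z => (rightExt u z).ncard - 1)
      (fun _ _ => Nat.zero_le _) (Finset.mem_filter.2 ⟨hT.mem_toFinset.2 ?_, List.suffix_refl s⟩)
    exact ⟨hs, fun t => ⟨hocc t, by rintro rfl; exact hs0⟩⟩
  have hfree (t : ℕ) : ¬ OccursIn w s t := fun ht => hs0 (hocc t ht ▸ ht)
  have hlen : s.length < N := by
    by_contra! h
    obtain ⟨t, ht⟩ := exists_occursIn_of_le_length hN hs h
    exact hfree t ht
  have hoccE (a : A) (t : ℕ) (ht : OccursIn w (a :: s) t) : t = 0 := by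
    cases t with
    | zero => rfl
    | succ t => exact absurd (occursIn_cons_succ.1 ht) (hfree t)
  calc (rightExt u s).ncard - 1
      ≤ ∑ a ∈ (leftExt u s).toFinite.toFinset, ((rightExt u (a :: s)).ncard - 1) :=
        ncard_rightExt_sub_one_le_sum (hB s hs)
    _ ≤ ∑ a ∈ (leftExt u s).toFinite.toFinset,
          ∑ z ∈ hT.toFinset with a :: s <:+ z, ((rightExt u z).ncard - 1) :=
        Finset.sum_le_sum fun a ha => ncard_rightExt_sub_one_le_sum_returnPrefixes hN hB hT
          ((leftExt u s).toFinite.mem_toFinset.1 ha) (hoccE a)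
    _ = ∑ x ∈ (leftExt u s).toFinite.toFinset.image (· :: s),
          ∑ z ∈ hT.toFinset with x <:+ z, ((rightExt u z).ncard - 1) :=
        (Finset.sum_image (f := fun x => ∑ z ∈ hT.toFinset with x <:+ z,
          ((rightExt u z).ncard - 1)) fun a _ b _ h => (List.cons.inj h).1).symm
    _ ≤ _ := sum_sum_filter_suffix_le _ (by simp) (by simp)
termination_by N - s.length

theorem sum_factorsOfLength_le_sum_returnPrefixes {N : ℕ}
    (hN : ∀ y, IsFactor u y → y.length = N → w <:+: y)
    (hB : ∀ s, IsFactor u s → 0 ≤ bilateralOrder u s) (hT : (returnPrefixes u w).Finite) :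
    ∑ x ∈ (factorsOfLength_finite u w.length).toFinset, ((rightExt u x).ncard - 1) ≤
      ∑ z ∈ hT.toFinset, ((rightExt u z).ncard - 1) := by
  classical
  have hF := factorsOfLength_finite u w.length
  calc ∑ x ∈ hF.toFinset, ((rightExt u x).ncard - 1)
      ≤ ∑ x ∈ hF.toFinset, ∑ z ∈ hT.toFinset with x <:+ z, ((rightExt u z).ncard - 1) := by
        refine Finset.sum_le_sum fun x hx => ?_
        obtain ⟨hlen, hx⟩ := hF.mem_toFinset.1 hx
        exact ncard_rightExt_sub_one_le_sum_returnPrefixes hN hB hT hx fun t ht => by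
          have := ht.1
          omega
    _ ≤ ∑ z ∈ hT.toFinset with [] <:+ z, ((rightExt u z).ncard - 1) :=
        sum_sum_filter_suffix_le _
          (fun x hx y hy => (hF.mem_toFinset.1 hx).1.trans (hF.mem_toFinset.1 hy).1.symm)
          fun _ _ => List.nil_suffix
    _ = _ := by simp

end Counting

/-- If `u` is uniformly recurrent with no weak bispecial factor, then
`#R(w) ≥ 1 + ΔC(|w|)` for every factor `w` of `u`. -/
theorem card_returnWords_ge [Fintype A] (u : ℕ → A) (hur : UniformlyRecurrent u)
    (hwb : ∀ w, ¬ WeakBispecial u w) :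
    ∀ w, IsFactor u w →
      1 + ((Complexity u (w.length + 1) : ℤ) - (Complexity u w.length : ℤ)) ≤
        ((returnWords u w).ncard : ℤ) := by
  intro w hw
  obtain ⟨N, hN⟩ := hur w.length
  have hNw (y : List A) (hy : IsFactor u y) (hlen : y.length = N) : w <:+: y :=
    hN y hy hlen w hw rfl
  have hB (s : List A) (hs : IsFactor u s) : 0 ≤ bilateralOrder u s :=
    not_lt.1 fun h => hwb s ⟨hs, h⟩
  have hT := returnPrefixes_finite hNw
  have hC := complexity_succ u w.length
  have hle := sum_factorsOfLength_le_sum_returnPrefixes hNw hB hT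
  have hR := ncard_completeReturnWords hw hT
  rw [ncard_returnWords, hR, hC]
  omega
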